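/- For any modal propositions A and B, iK4 ⊢ □A^□ → (([A]B)^□ ↔ [A^□](B^□)). -/

import Mathlib

/-- Modal propositional formulas: atoms, ⊥, ∧, ∨, →, □. -/
inductive Form : Type
  | atom : ℕ → Form
  | bot  : Form
  | and  : Form → Form → Form
  | or   : Form → Form → Form
  | imp  : Form → Form → Form
  | box  : Form → Form
  deriving DecidableEq

namespace Form

/-- ⊤ := ⊥ → ⊥. -/
def top : Form := .imp .bot .bot

/-- Biimplication A ↔ B := (A → B) ∧ (B → A). -/
def biimp (A B : Form) : Form := .and (.imp A B) (.imp B A)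

/-- ⊡A := A ∧ □A. -/
def dotbox (A : Form) : Form := .and A (.box A)

/-- Axiom schemes of intuitionistic propositional logic (in the modal language;
no axioms for □, so boxed formulas behave as atoms). -/
inductive IpcAx : Form → Prop
  | k (A B : Form) : IpcAx (.imp A (.imp B A))
  | s (A B C : Form) : IpcAx (.imp (.imp A (.imp B C)) (.imp (.imp A B) (.imp A C)))
  | andI (A B : Form) : IpcAx (.imp A (.imp B (.and A B)))
  | andE₁ (A B : Form) : IpcAx (.imp (.and A B) A)
  | andE₂ (A B : Form) : IpcAx (.imp (.and A B) B)
  | orI₁ (A B : Form) : IpcAx (.imp A (.or A B))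
  | orI₂ (A B : Form) : IpcAx (.imp B (.or A B))
  | orE (A B C : Form) : IpcAx (.imp (.imp A C) (.imp (.imp B C) (.imp (.or A B) C)))
  | exfalso (A : Form) : IpcAx (.imp .bot A)

/-- Derivability from the axiom set `Ax` by modus ponens alone. -/
inductive DerivMP (Ax : Form → Prop) : Form → Prop
  | ax {A : Form} : Ax A → DerivMP Ax A
  | mp {A B : Form} : DerivMP Ax (.imp A B) → DerivMP Ax A → DerivMP Ax B

/-- Derivability from the axiom set `Ax` by modus ponens and necessitation. -/
inductive Deriv (Ax : Form → Prop) : Form → Prop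
  | ax {A : Form} : Ax A → Deriv Ax A
  | mp {A B : Form} : Deriv Ax (.imp A B) → Deriv Ax A → Deriv Ax B
  | nec {A : Form} : Deriv Ax A → Deriv Ax (.box A)

/-- The K axiom scheme □(A→B)→(□A→□B). -/
def KAx (F : Form) : Prop := ∃ A B : Form, F = .imp (.box (.imp A B)) (.imp (.box A) (.box B))
/-- The 4 axiom scheme □A→□□A. -/
def FourAx (F : Form) : Prop := ∃ A : Form, F = .imp (.box A) (.box (.box A))
/-- Löb's axiom scheme □(□A→A)→□A. -/
def LobAx (F : Form) : Prop := ∃ A : Form, F = .imp (.box (.imp (.box A) A)) (.box A)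
/-- The completeness principle scheme A→□A. -/
def CPAx (F : Form) : Prop := ∃ A : Form, F = .imp A (.box A)
/-- The completeness principle restricted to atoms: p→□p. -/
def CPaAx (F : Form) : Prop := ∃ n : ℕ, F = .imp (.atom n) (.box (.atom n))

/-- Axioms of iK4: IPC plus K plus 4. -/
def K4Ax (F : Form) : Prop := IpcAx F ∨ KAx F ∨ FourAx F
/-- Axioms of iGL: iK4 plus Löb. -/
def GLAx (F : Form) : Prop := K4Ax F ∨ LobAx F

/-- IPC_□ provability (modus ponens only; no rules for □). -/
def IPCbox (A : Form) : Prop := DerivMP IpcAx A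
/-- iK4 provability. -/
def IK4 (A : Form) : Prop := Deriv K4Ax A
/-- iGL provability. -/
def IGL (A : Form) : Prop := Deriv GLAx A
/-- iGLC := iGL + CP. -/
def IGLC (A : Form) : Prop := Deriv (fun F => GLAx F ∨ CPAx F) A

/-- The box translation A^□. -/
def boxT : Form → Form
  | .atom n => .and (.atom n) (.box (.atom n))
  | .bot => .bot
  | .and A B => .and (boxT A) (boxT B)
  | .or A B => .or (boxT A) (boxT B)
  | .imp A B => .and (.imp (boxT A) (boxT B)) (.box (.imp (boxT A) (boxT B)))
  | .box A => .box (boxT A)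

/-- `[A]B`: identity on atoms, ⊥ and boxed formulas, commutes with ∧ and ∨,
and `[A](B₁→B₂) = A→(B₁→B₂)`. -/
def bracket (A : Form) : Form → Form
  | .and B C => .and (bracket A B) (bracket A C)
  | .or B C => .or (bracket A B) (bracket A C)
  | .imp B C => .imp A (.imp B C)
  | B => B

/-- Conjunction of a finite list of formulas. -/
def conj (l : List Form) : Form := l.foldr .and top
/-- Disjunction of a finite list of formulas. -/
def disj (l : List Form) : Form := l.foldr .or .bot

/-- `[A]Z := ⋁{[A]E : E ∈ Z}`. -/
def bracketList (A : Form) (Z : List Form) : Form := disj (Z.map (bracket A))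

/-- A finite set of implications, given as the list of (antecedent, consequent) pairs. -/
def impsOf (X : List (Form × Form)) : List Form := X.map fun D => .imp D.1 D.2

def IsAtomOrBoxed (p : Form) : Prop := (∃ n : ℕ, p = .atom n) ∨ (∃ B : Form, p = .box B)

/-- The relation ▶* (with rule B2). -/
inductive PresS : Form → Form → Prop
  | a1 {A B : Form} : IK4 (.imp A B) → PresS A B
  | a2 {A B C : Form} : PresS A B → PresS B C → PresS A C
  | a3 {A B C : Form} : PresS C A → PresS C B → PresS C (.and A B)
  | a4 {A B : Form} : PresS A B → PresS (.box A) (.box B)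
  | b1 {A B C : Form} : PresS A C → PresS B C → PresS (.or A B) C
  | b2 (X : List (Form × Form)) (C : Form) :
      PresS (.and (.imp (conj (impsOf X)) C) (.box (conj (impsOf X))))
            (bracketList (conj (impsOf X)) (X.map Prod.fst ++ [C]))
  | b3 {p A B : Form} : IsAtomOrBoxed p → PresS A B → PresS (.imp p A) (.imp p B)

/-- The relation ▶ (with rule B2′ instead of B2). -/
inductive Pres : Form → Form → Prop
  | a1 {A B : Form} : IK4 (.imp A B) → Pres A B
  | a2 {A B C : Form} : Pres A B → Pres B C → Pres A C
  | a3 {A B C : Form} : Pres C A → Pres C B → Pres C (.and A B)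
  | a4 {A B : Form} : Pres A B → Pres (.box A) (.box B)
  | b1 {A B C : Form} : Pres A C → Pres B C → Pres (.or A B) C
  | b2 (X : List (Form × Form)) (C : Form) :
      Pres (.imp (conj (impsOf X)) C)
           (bracketList (conj (impsOf X)) (X.map Prod.fst ++ [C]))
  | b3 {p A B : Form} : IsAtomOrBoxed p → Pres A B → Pres (.imp p A) (.imp p B)

/-- iH*_σ := iGL + CP + {□A→□B : A ▶* B}. -/
def IHstarAx (F : Form) : Prop :=
  GLAx F ∨ CPAx F ∨ ∃ A B : Form, PresS A B ∧ F = .imp (.box A) (.box B)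
def IHstar (A : Form) : Prop := Deriv IHstarAx A

/-- NOI (as a Boolean predicate): every → occurs within the scope of some □. -/
def noi : Form → Bool
  | .atom _ => true
  | .bot => true
  | .and A B => noi A && noi B
  | .or A B => noi A && noi B
  | .imp _ _ => false
  | .box _ => true

/-- NOI: every occurrence of → lies within the scope of some □. -/
def NOI (A : Form) : Prop := noi A = true

/-- The Leivant translation A^l. -/
def leiv : Form → Form
  | .and A B => .and (leiv A) (leiv B)
  | .or A B => .or (dotbox (leiv A)) (dotbox (leiv B))
  | .imp A B => if noi A then .imp A (leiv B) else .imp A B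
  | A => A

/-- iH_σ := iGL + CP_a + Le⁺ + {□A→□B : A ▶ B}. -/
def IHsigmaAx (F : Form) : Prop :=
  GLAx F ∨ CPaAx F ∨ (∃ A : Form, F = .imp (.box A) (.box (leiv A)))
    ∨ ∃ A B : Form, Pres A B ∧ F = .imp (.box A) (.box B)
def IHsigma (A : Form) : Prop := Deriv IHsigmaAx A

/-- TNNIL: smallest class containing atoms and ⊥, closed under ∧, ∨, □, and
containing A→B whenever A, B ∈ TNNIL and A ∈ NOI. -/
inductive TNNIL : Form → Prop
  | atom (n : ℕ) : TNNIL (.atom n)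
  | bot : TNNIL .bot
  | and {A B : Form} : TNNIL A → TNNIL B → TNNIL (.and A B)
  | or {A B : Form} : TNNIL A → TNNIL B → TNNIL (.or A B)
  | box {A : Form} : TNNIL A → TNNIL (.box A)
  | imp {A B : Form} : NOI A → TNNIL A → TNNIL B → TNNIL (.imp A B)

/-- Substitution of formulas for atoms. -/
def subst (σ : ℕ → Form) : Form → Form
  | .atom n => σ n
  | .bot => .bot
  | .and A B => .and (subst σ A) (subst σ B)
  | .or A B => .or (subst σ A) (subst σ B)
  | .imp A B => .imp (subst σ A) (subst σ B)
  | .box A => .box (subst σ A)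

/-- Non-modal (□-free) formulas. -/
def BoxFree : Form → Prop
  | .atom _ => True
  | .bot => True
  | .and A B => BoxFree A ∧ BoxFree B
  | .or A B => BoxFree A ∧ BoxFree B
  | .imp A B => BoxFree A ∧ BoxFree B
  | .box _ => False

/-- TNNIL⁻: formulas of the form A(□B₁,…,□Bₙ) with A non-modal and each Bᵢ ∈ TNNIL. -/
def TNNILminus (F : Form) : Prop :=
  ∃ (A : Form) (σ : ℕ → Form), BoxFree A ∧
    (∀ n : ℕ, σ n = .atom n ∨ ∃ B : Form, TNNIL B ∧ σ n = .box B) ∧ F = subst σ A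

/-- The complexity measure ρ (with ρ(□A)=0). -/
def rho : Form → ℕ
  | .atom _ => 0
  | .bot => 0
  | .and A B => max (rho A) (rho B)
  | .or A B => max (rho A) (rho B)
  | .imp A B => max (rho A + 1) (rho B)
  | .box _ => 0

/-- Atoms occurring in a formula. -/
def atoms : Form → Finset ℕ
  | .atom n => {n}
  | .bot => ∅
  | .and A B => atoms A ∪ atoms B
  | .or A B => atoms A ∪ atoms B
  | .imp A B => atoms A ∪ atoms B
  | .box A => atoms A

/-- IPC provability for non-modal formulas (all axiom instances non-modal). -/
def IPC (A : Form) : Prop := DerivMP (fun F => IpcAx F ∧ BoxFree F) A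

/-- An effective encoding of formulas as lists of naturals. -/
def code : Form → List ℕ
  | .atom n => [0, n]
  | .bot => [1]
  | .and A B => 2 :: (code A ++ code B)
  | .or A B => 3 :: (code A ++ code B)
  | .imp A B => 4 :: (code A ++ code B)
  | .box A => 5 :: code A

/-- `B↓D := ⋀((X∖{D})∪{F})` for `D = (E→F) ∈ X`. -/
def bdown (X : List (Form × Form)) (D : Form × Form) : Form :=
  conj (impsOf (X.erase D) ++ [D.2])

/-- The axioms of iGL closed under boxing: if B is an axiom then so is □B. -/
inductive GLAxBox : Form → Prop
  | base {A : Form} : GLAx A → GLAxBox A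
  | box {A : Form} : GLAxBox A → GLAxBox (.box A)

end Form

namespace Form

lemma ik4_ipc {A : Form} (h : IpcAx A) : IK4 A := Deriv.ax (Or.inl h)

lemma ik4_K (A B : Form) : IK4 (.imp (.box (.imp A B)) (.imp (.box A) (.box B))) :=
  Deriv.ax (Or.inr (Or.inl ⟨A, B, rfl⟩))

lemma ik4_4 (A : Form) : IK4 (.imp (.box A) (.box (.box A))) :=
  Deriv.ax (Or.inr (Or.inr ⟨A, rfl⟩))

lemma ik4_id (A : Form) : IK4 (A.imp A) :=
  ((ik4_ipc (IpcAx.s A (A.imp A) A)).mp (ik4_ipc (IpcAx.k A (A.imp A)))).mp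
    (ik4_ipc (IpcAx.k A A))

lemma boxMono {A B : Form} (h : IK4 (A.imp B)) : IK4 ((Form.box A).imp (.box B)) :=
  (ik4_K A B).mp h.nec

/-- Derivations in iK4 from a list of hypotheses (mp only; closed theorems imported). -/
inductive DHyp (Γ : List Form) : Form → Prop
  | hyp {A : Form} : A ∈ Γ → DHyp Γ A
  | thm {A : Form} : IK4 A → DHyp Γ A
  | mp {A B : Form} : DHyp Γ (A.imp B) → DHyp Γ A → DHyp Γ B

theorem DHyp.weak {Γ Γ' : List Form} {A : Form} (h : DHyp Γ A)
    (hs : ∀ x ∈ Γ, x ∈ Γ') : DHyp Γ' A := by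
  induction h with
  | hyp h => exact .hyp (hs _ h)
  | thm h => exact .thm h
  | mp _ _ ih1 ih2 => exact .mp ih1 ih2

theorem DHyp.wk {Γ : List Form} {A C : Form} (h : DHyp Γ A) : DHyp (C :: Γ) A :=
  h.weak fun _ hx => List.mem_cons_of_mem _ hx

theorem DHyp.ded {Γ : List Form} {A B : Form} (h : DHyp (A :: Γ) B) :
    DHyp Γ (A.imp B) := by
  induction h with
  | hyp h =>
    rcases List.mem_cons.mp h with h | h
    · subst h; exact .thm (ik4_id _)
    · exact .mp (.thm (ik4_ipc (IpcAx.k _ A))) (.hyp h)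
  | thm h => exact .mp (.thm (ik4_ipc (IpcAx.k _ A))) (.thm h)
  | mp _ _ ih1 ih2 => exact .mp (.mp (.thm (ik4_ipc (IpcAx.s A _ _))) ih1) ih2

theorem DHyp.toIK4 {A : Form} (h : DHyp [] A) : IK4 A := by
  induction h with
  | hyp h => simp at h
  | thm h => exact h
  | mp _ _ ih1 ih2 => exact ih1.mp ih2

lemma dAndI {Γ : List Form} {A B : Form} (h1 : DHyp Γ A) (h2 : DHyp Γ B) :
    DHyp Γ (A.and B) :=
  .mp (.mp (.thm (ik4_ipc (IpcAx.andI A B))) h1) h2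

lemma dAnd1 {Γ : List Form} {A B : Form} (h : DHyp Γ (A.and B)) : DHyp Γ A :=
  .mp (.thm (ik4_ipc (IpcAx.andE₁ A B))) h

lemma dAnd2 {Γ : List Form} {A B : Form} (h : DHyp Γ (A.and B)) : DHyp Γ B :=
  .mp (.thm (ik4_ipc (IpcAx.andE₂ A B))) h

lemma dBoxMP {Γ : List Form} {A B : Form} (h1 : DHyp Γ (.box (A.imp B)))
    (h2 : DHyp Γ (.box A)) : DHyp Γ (.box B) :=
  .mp (.mp (.thm (ik4_K A B)) h1) h2

lemma dBoxAnd {Γ : List Form} {A B : Form} (h1 : DHyp Γ (.box A))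
    (h2 : DHyp Γ (.box B)) : DHyp Γ (.box (A.and B)) :=
  dBoxMP (.mp (.thm (boxMono (ik4_ipc (IpcAx.andI A B)))) h1) h2

lemma dBiimp {Γ : List Form} {A B : Form} (h1 : DHyp Γ (A.imp B))
    (h2 : DHyp Γ (B.imp A)) : DHyp Γ (biimp A B) := dAndI h1 h2

lemma dBiimp1 {Γ : List Form} {A B : Form} (h : DHyp Γ (biimp A B)) :
    DHyp Γ (A.imp B) := dAnd1 h

lemma dBiimp2 {Γ : List Form} {A B : Form} (h : DHyp Γ (biimp A B)) :
    DHyp Γ (B.imp A) := dAnd2 h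

lemma biimpRefl {Γ : List Form} (A : Form) : DHyp Γ (biimp A A) :=
  dAndI (.thm (ik4_id A)) (.thm (ik4_id A))

lemma biimpAnd {Γ : List Form} {L1 R1 L2 R2 : Form}
    (h1 : DHyp Γ (biimp L1 R1)) (h2 : DHyp Γ (biimp L2 R2)) :
    DHyp Γ (biimp (L1.and L2) (R1.and R2)) := by
  refine dBiimp (DHyp.ded ?_) (DHyp.ded ?_)
  · exact dAndI ((dBiimp1 h1).wk.mp (dAnd1 (.hyp (List.mem_cons_self))))
      ((dBiimp1 h2).wk.mp (dAnd2 (.hyp (List.mem_cons_self))))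
  · exact dAndI ((dBiimp2 h1).wk.mp (dAnd1 (.hyp (List.mem_cons_self))))
      ((dBiimp2 h2).wk.mp (dAnd2 (.hyp (List.mem_cons_self))))

lemma biimpOrDir {Γ : List Form} {L1 R1 L2 R2 : Form}
    (h1 : DHyp Γ (L1.imp R1)) (h2 : DHyp Γ (L2.imp R2)) :
    DHyp Γ ((L1.or L2).imp (R1.or R2)) := by
  refine .mp (.mp (.thm (ik4_ipc (IpcAx.orE L1 L2 (R1.or R2)))) ?_) ?_
  · exact DHyp.ded (.mp (.thm (ik4_ipc (IpcAx.orI₁ R1 R2)))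
      (h1.wk.mp (.hyp (List.mem_cons_self))))
  · exact DHyp.ded (.mp (.thm (ik4_ipc (IpcAx.orI₂ R1 R2)))
      (h2.wk.mp (.hyp (List.mem_cons_self))))

lemma biimpOr {Γ : List Form} {L1 R1 L2 R2 : Form}
    (h1 : DHyp Γ (biimp L1 R1)) (h2 : DHyp Γ (biimp L2 R2)) :
    DHyp Γ (biimp (L1.or L2) (R1.or R2)) :=
  dBiimp (biimpOrDir (dBiimp1 h1) (dBiimp1 h2))
    (biimpOrDir (dBiimp2 h1) (dBiimp2 h2))

/-- The key implication case. -/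
lemma impCase (a x : Form) :
    DHyp [Form.box a]
      (biimp ((a.imp (x.and (.box x))).and (.box (a.imp (x.and (.box x)))))
             ((a.imp x).and (.box x))) := by
  refine dBiimp (DHyp.ded ?_) (DHyp.ded ?_)
  · -- L := (a→X)∧□(a→X) ⊢ (a→x)∧□x, where X = x∧□x
    have hL : DHyp ((a.imp (x.and (.box x))).and (.box (a.imp (x.and (.box x))))
        :: [Form.box a]) ((a.imp (x.and (.box x))).and (.box (a.imp (x.and (.box x))))) :=
      .hyp (List.mem_cons_self)
    have hbX := dBoxMP (dAnd2 hL)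
      (DHyp.hyp (List.mem_cons_of_mem _ (List.mem_cons_self)))
    have hbx : DHyp _ (Form.box x) :=
      .mp (.thm (boxMono (ik4_ipc (IpcAx.andE₁ x (.box x))))) hbX
    refine dAndI (DHyp.ded ?_) hbx
    exact dAnd1 ((dAnd1 hL).wk.mp (.hyp (List.mem_cons_self)))
  · -- R := (a→x)∧□x ⊢ (a→X)∧□(a→X)
    have hR : DHyp ((a.imp x).and (.box x) :: [Form.box a])
        ((a.imp x).and (.box x)) := .hyp (List.mem_cons_self)
    have hbx := dAnd2 hR
    have haX : DHyp _ ((a.imp (x.and (.box x)))) :=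
      DHyp.ded (dAndI ((dAnd1 hR).wk.mp (.hyp (List.mem_cons_self))) hbx.wk)
    have hbbx : DHyp _ (Form.box (Form.box x)) := .mp (.thm (ik4_4 x)) hbx
    have hbX := dBoxAnd hbx hbbx
    have hbaX : DHyp _ (Form.box (a.imp (x.and (.box x)))) :=
      .mp (.thm (boxMono (ik4_ipc (IpcAx.k (x.and (.box x)) a)))) hbX
    exact dAndI haX hbaX

end Form

/-- iK4 ⊢ □A^□ → (([A]B)^□ ↔ [A^□](B^□)). -/
theorem stmt9 (A B : Form) :
    Form.IK4 (.imp (.box (Form.boxT A))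
      (Form.biimp (Form.boxT (Form.bracket A B))
        (Form.bracket (Form.boxT A) (Form.boxT B)))) := by
  have main : Form.DHyp [Form.box (Form.boxT A)]
      (Form.biimp (Form.boxT (Form.bracket A B))
        (Form.bracket (Form.boxT A) (Form.boxT B))) := by
    induction B with
    | atom n => exact Form.biimpRefl _
    | bot => exact Form.biimpRefl _
    | box C _ => exact Form.biimpRefl _
    | and C D ihC ihD => exact Form.biimpAnd ihC ihD
    | or C D ihC ihD => exact Form.biimpOr ihC ihD
    | imp C D _ _ => exact Form.impCase (Form.boxT A) ((Form.boxT C).imp (Form.boxT D))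
  exact Form.DHyp.toIK4 main.ded
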